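/- The function f : (0,∞) → ℝ, f(x) = I₁(x)/I₀(x), where Iₙ is the n-th modified Bessel function of the first kind, is strictly increasing and has range (0,1); in particular 0 < I₁(x)/I₀(x) < 1 for all x > 0, f(x) → 0 as x → 0⁺, and f(x) → 1 as x → ∞. -/

import Mathlib

open Real

/-- The modified Bessel function `I₀(x) = (1/2π)∫₀^{2π} e^{x cos θ} dθ`. -/
noncomputable def besselI0 (x : ℝ) : ℝ :=
  (1 / (2 * π)) * ∫ θ in (0:ℝ)..(2 * π), Real.exp (x * Real.cos θ)

/-- The modified Bessel function `I₁(x) = (1/2π)∫₀^{2π} e^{x cos θ} cos θ dθ`. -/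
noncomputable def besselI1 (x : ℝ) : ℝ :=
  (1 / (2 * π)) * ∫ θ in (0:ℝ)..(2 * π), Real.exp (x * Real.cos θ) * Real.cos θ

/-!
`I₁(x)/I₀(x)` is the mean of `cos θ` for the weight `e^{x cos θ}` on `[0, 2π]`. Differentiating
under the integral sign, its derivative is the variance of `cos θ` for that weight, which is
positive. The mean vanishes at `x = 0`, and it is below `1` because `cos θ < 1` away from
`θ = 0, 2π`. As `x → ∞` the weight concentrates at `θ = 0`: its total mass is at least
`(δ/2) e^{x cos(δ/2)}`, and the region where `cos θ < cos δ` carries at most `2π e^{x cos δ}`,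
so `1 - I₁/I₀ ≤ (1 - cos δ) + (8π/δ) e^{-x (cos(δ/2) - cos δ)}`.
-/

open Set Filter Topology intervalIntegral

noncomputable def vonMisesIntegral (g : ℝ → ℝ) (x : ℝ) : ℝ :=
  ∫ θ in (0:ℝ)..2 * π, exp (x * cos θ) * g θ

noncomputable def vonMisesMean (x : ℝ) : ℝ :=
  vonMisesIntegral cos x / vonMisesIntegral (fun _ => 1) x

section

variable {g h : ℝ → ℝ}

lemma intervalIntegrable_exp_mul_cos_mul (hg : Continuous g) (x a b : ℝ) :
    IntervalIntegrable (fun θ => exp (x * cos θ) * g θ) MeasureTheory.volume a b :=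
  (by fun_prop : Continuous fun θ => exp (x * cos θ) * g θ).intervalIntegrable a b

lemma vonMisesIntegral_add (hg : Continuous g) (hh : Continuous h) (x : ℝ) :
    vonMisesIntegral (fun θ => g θ + h θ) x = vonMisesIntegral g x + vonMisesIntegral h x := by
  simp only [vonMisesIntegral, mul_add]
  exact integral_add (intervalIntegrable_exp_mul_cos_mul hg x _ _)
    (intervalIntegrable_exp_mul_cos_mul hh x _ _)

lemma vonMisesIntegral_sub (hg : Continuous g) (hh : Continuous h) (x : ℝ) :
    vonMisesIntegral (fun θ => g θ - h θ) x = vonMisesIntegral g x - vonMisesIntegral h x := by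
  simp only [vonMisesIntegral, mul_sub]
  exact integral_sub (intervalIntegrable_exp_mul_cos_mul hg x _ _)
    (intervalIntegrable_exp_mul_cos_mul hh x _ _)

lemma vonMisesIntegral_const_mul (c x : ℝ) :
    vonMisesIntegral (fun θ => c * g θ) x = c * vonMisesIntegral g x := by
  simp only [vonMisesIntegral, mul_left_comm _ c]
  exact integral_const_mul c _

lemma vonMisesIntegral_pos (hg : Continuous g) (hg₀ : ∀ θ, 0 ≤ g θ) {c : ℝ}
    (hc : c ∈ Icc 0 (2 * π)) (hgc : 0 < g c) (x : ℝ) : 0 < vonMisesIntegral g x :=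
  integral_pos (by positivity)
    (by fun_prop : Continuous fun θ => exp (x * cos θ) * g θ).continuousOn
    (fun θ _ => mul_nonneg (exp_pos _).le (hg₀ θ)) ⟨c, hc, mul_pos (exp_pos _) hgc⟩

lemma hasDerivAt_vonMisesIntegral (hg : Continuous g) (x₀ : ℝ) :
    HasDerivAt (vonMisesIntegral g) (vonMisesIntegral (fun θ => cos θ * g θ) x₀) x₀ := by
  refine (hasDerivAt_integral_of_dominated_loc_of_deriv_le
    (F' := fun x θ => exp (x * cos θ) * (cos θ * g θ))
    (bound := fun θ => exp (|x₀| + 1) * |g θ|) (Metric.ball_mem_nhds x₀ one_pos)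
    (Eventually.of_forall fun x => (intervalIntegrable_exp_mul_cos_mul hg x _ _).def'.1)
    (intervalIntegrable_exp_mul_cos_mul hg x₀ _ _)
    (intervalIntegrable_exp_mul_cos_mul (by fun_prop) x₀ _ _).def'.1
    (Eventually.of_forall fun θ _ x hx => ?_)
    ((by fun_prop : Continuous fun θ => exp (|x₀| + 1) * |g θ|).intervalIntegrable _ _)
    (Eventually.of_forall fun θ _ x _ => ?_)).2
  · have hx : x * cos θ ≤ |x₀| + 1 := calc
      x * cos θ ≤ |x| * |cos θ| := (le_abs_self _).trans (abs_mul _ _).le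
      _ ≤ |x| := mul_le_of_le_one_right (abs_nonneg _) (abs_cos_le_one θ)
      _ ≤ |x₀| + 1 := by
        have := abs_sub_abs_le_abs_sub x x₀
        have := Metric.mem_ball.1 hx
        rw [dist_eq] at this
        linarith
    rw [norm_mul, norm_mul, norm_of_nonneg (exp_pos _).le, norm_eq_abs, norm_eq_abs]
    calc exp (x * cos θ) * (|cos θ| * |g θ|) ≤ exp (x * cos θ) * |g θ| := by
          gcongr; exact mul_le_of_le_one_left (abs_nonneg _) (abs_cos_le_one θ)
      _ ≤ exp (|x₀| + 1) * |g θ| := by gcongr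
  · exact (((hasDerivAt_mul_const (cos θ)).exp).mul_const (g θ)).congr_deriv (by ring)

end

lemma hasDerivAt_vonMisesIntegral_one (x : ℝ) :
    HasDerivAt (vonMisesIntegral fun _ => 1) (vonMisesIntegral cos x) x := by
  simpa only [mul_one] using hasDerivAt_vonMisesIntegral (continuous_const (y := (1:ℝ))) x

lemma vonMisesIntegral_one_pos (x : ℝ) : 0 < vonMisesIntegral (fun _ => 1) x :=
  vonMisesIntegral_pos continuous_const (fun _ => zero_le_one) ⟨le_rfl, by positivity⟩ one_pos x

lemma vonMisesIntegral_sub_sq (t x : ℝ) :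
    vonMisesIntegral (fun θ => (cos θ - t) ^ 2) x = vonMisesIntegral (fun θ => cos θ * cos θ) x
      - 2 * t * vonMisesIntegral cos x + t ^ 2 * vonMisesIntegral (fun _ => 1) x := by
  have : (fun θ => (cos θ - t) ^ 2) = fun θ => (cos θ * cos θ - 2 * t * cos θ) + t ^ 2 * 1 := by
    ext; ring
  rw [this, vonMisesIntegral_add (by fun_prop) continuous_const, vonMisesIntegral_sub (by fun_prop)
    (by fun_prop), vonMisesIntegral_const_mul, vonMisesIntegral_const_mul]

lemma vonMisesIntegral_sub_sq_pos (t x : ℝ) :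
    0 < vonMisesIntegral (fun θ => (cos θ - t) ^ 2) x := by
  rcases eq_or_ne t 1 with rfl | ht
  · exact vonMisesIntegral_pos (by fun_prop) (fun _ => sq_nonneg _)
      ⟨pi_pos.le, by linarith [pi_pos]⟩ (by norm_num) x
  · exact vonMisesIntegral_pos (by fun_prop) (fun _ => sq_nonneg _)
      ⟨le_rfl, by positivity⟩ (by rw [cos_zero]; exact sq_pos_iff.2 (sub_ne_zero.2 ht.symm)) x

lemma sq_vonMisesIntegral_cos_lt (x : ℝ) :
    vonMisesIntegral cos x ^ 2
      < vonMisesIntegral (fun θ => cos θ * cos θ) x * vonMisesIntegral (fun _ => 1) x := by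
  have hF := vonMisesIntegral_one_pos x
  set F := vonMisesIntegral (fun _ => 1) x
  set G := vonMisesIntegral cos x
  set H := vonMisesIntegral (fun θ => cos θ * cos θ) x
  have hvar := vonMisesIntegral_sub_sq_pos (G / F) x
  rw [vonMisesIntegral_sub_sq, show H - 2 * (G / F) * G + (G / F) ^ 2 * F = (H * F - G ^ 2) / F by
    field_simp; ring, div_pos_iff_of_pos_right hF] at hvar
  linarith

lemma hasDerivAt_vonMisesMean (x : ℝ) :
    HasDerivAt vonMisesMean
      ((vonMisesIntegral (fun θ => cos θ * cos θ) x * vonMisesIntegral (fun _ => 1) x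
        - vonMisesIntegral cos x * vonMisesIntegral cos x)
        / vonMisesIntegral (fun _ => 1) x ^ 2) x :=
  (hasDerivAt_vonMisesIntegral continuous_cos x).div (hasDerivAt_vonMisesIntegral_one x)
    (vonMisesIntegral_one_pos x).ne'

lemma strictMono_vonMisesMean : StrictMono vonMisesMean :=
  strictMono_of_deriv_pos fun x => by
    rw [(hasDerivAt_vonMisesMean x).deriv]
    have := sq_vonMisesIntegral_cos_lt x
    have := vonMisesIntegral_one_pos x
    exact div_pos (by nlinarith) (by positivity)

lemma vonMisesMean_zero : vonMisesMean 0 = 0 := by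
  simp [vonMisesMean, vonMisesIntegral, integral_cos]

lemma vonMisesMean_lt_one (x : ℝ) : vonMisesMean x < 1 := by
  rw [vonMisesMean, div_lt_one (vonMisesIntegral_one_pos x), ← sub_pos,
    ← vonMisesIntegral_sub continuous_const continuous_cos]
  exact vonMisesIntegral_pos (by fun_prop) (fun θ => sub_nonneg.2 (cos_le_one θ))
    ⟨pi_pos.le, by linarith [pi_pos]⟩ (by norm_num) x

lemma vonMisesIntegral_one_sub_cos_le {x : ℝ} (hx : 0 ≤ x) (δ : ℝ) :
    vonMisesIntegral (fun θ => 1 - cos θ) x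
      ≤ (1 - cos δ) * vonMisesIntegral (fun _ => 1) x + 4 * π * exp (x * cos δ) := by
  have hpt : ∀ θ, exp (x * cos θ) * (1 - cos θ)
      ≤ (1 - cos δ) * (exp (x * cos θ) * 1) + 2 * exp (x * cos δ) := by
    intro θ
    have hθ := exp_pos (x * cos θ)
    rcases le_or_gt (cos δ) (cos θ) with h | h
    · nlinarith [exp_pos (x * cos δ)]
    · have : exp (x * cos θ) ≤ exp (x * cos δ) := exp_le_exp.2 (by gcongr)
      nlinarith [cos_le_one δ, neg_one_le_cos θ]
  calc vonMisesIntegral (fun θ => 1 - cos θ) x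
      ≤ ∫ θ in (0:ℝ)..2 * π, ((1 - cos δ) * (exp (x * cos θ) * 1) + 2 * exp (x * cos δ)) :=
        integral_mono_on (by positivity) (intervalIntegrable_exp_mul_cos_mul (by fun_prop) x _ _)
          (((intervalIntegrable_exp_mul_cos_mul continuous_const x _ _).const_mul _).add
            intervalIntegrable_const) fun θ _ => hpt θ
    _ = _ := by
        rw [integral_add (((intervalIntegrable_exp_mul_cos_mul continuous_const x _ _).const_mul _))
          intervalIntegrable_const, integral_const_mul, integral_const, smul_eq_mul]
        simp only [vonMisesIntegral]
        ring

lemma mul_exp_mul_cos_le_vonMisesIntegral_one {x δ : ℝ} (hx : 0 ≤ x) (hδ : 0 ≤ δ) (hδπ : δ ≤ π) :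
    δ * exp (x * cos δ) ≤ vonMisesIntegral (fun _ => 1) x := calc
  δ * exp (x * cos δ) = ∫ _ in (0:ℝ)..δ, exp (x * cos δ) := by simp
  _ ≤ ∫ θ in (0:ℝ)..δ, exp (x * cos θ) * 1 :=
      integral_mono_on hδ intervalIntegrable_const
        (intervalIntegrable_exp_mul_cos_mul continuous_const x _ _) fun θ hθ => by
          rw [mul_one]
          exact exp_le_exp.2 (by gcongr; exact cos_le_cos_of_nonneg_of_le_pi hθ.1 hδπ hθ.2)
  _ ≤ vonMisesIntegral (fun _ => 1) x :=
      integral_mono_interval le_rfl hδ (by linarith [pi_pos])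
        (Eventually.of_forall fun θ => by positivity)
        (intervalIntegrable_exp_mul_cos_mul continuous_const x _ _)

lemma one_sub_vonMisesMean_le {x δ : ℝ} (hx : 0 ≤ x) (hδ : 0 < δ) (hδπ : δ ≤ π) :
    1 - vonMisesMean x ≤ (1 - cos δ) + 8 * π / δ * exp (-(x * (cos (δ / 2) - cos δ))) := by
  have hF := vonMisesIntegral_one_pos x
  have hlow := mul_exp_mul_cos_le_vonMisesIntegral_one hx (by positivity : 0 ≤ δ / 2)
    (by linarith)
  calc 1 - vonMisesMean x
      = vonMisesIntegral (fun θ => 1 - cos θ) x / vonMisesIntegral (fun _ => 1) x := by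
        rw [vonMisesIntegral_sub continuous_const continuous_cos, vonMisesMean]
        field_simp
    _ ≤ ((1 - cos δ) * vonMisesIntegral (fun _ => 1) x + 4 * π * exp (x * cos δ))
          / vonMisesIntegral (fun _ => 1) x := by
        gcongr; exact vonMisesIntegral_one_sub_cos_le hx δ
    _ = (1 - cos δ) + 4 * π * exp (x * cos δ) / vonMisesIntegral (fun _ => 1) x := by
        field_simp
    _ ≤ (1 - cos δ) + 4 * π * exp (x * cos δ) / (δ / 2 * exp (x * cos (δ / 2))) := by
        gcongr
    _ = _ := by
        rw [show -(x * (cos (δ / 2) - cos δ)) = x * cos δ - x * cos (δ / 2) by ring, exp_sub]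
        field_simp
        ring

lemma tendsto_vonMisesMean_atTop : Tendsto vonMisesMean atTop (𝓝 1) := by
  refine tendsto_order.2 ⟨fun a ha => ?_,
    fun b hb => Eventually.of_forall fun x => (vonMisesMean_lt_one x).trans hb⟩
  obtain ⟨δ, hδcos, hδ⟩ : ∃ δ, (1 + a) / 2 < cos δ ∧ δ ∈ Ioo 0 π :=
    ((((continuous_cos.tendsto 0).eventually (lt_mem_nhds (by rw [cos_zero]; linarith))).filter_mono
      nhdsWithin_le_nhds).and (Ioo_mem_nhdsGT pi_pos)).exists
  have hgap : 0 < cos (δ / 2) - cos δ :=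
    sub_pos.2 (cos_lt_cos_of_nonneg_of_le_pi (by linarith [hδ.1]) hδ.2.le (by linarith [hδ.1]))
  have hdecay : Tendsto (fun x => 8 * π / δ * exp (-(x * (cos (δ / 2) - cos δ)))) atTop (𝓝 0) := by
    simpa using (tendsto_exp_neg_atTop_nhds_zero.comp
      (tendsto_id.atTop_mul_const hgap)).const_mul (8 * π / δ)
  filter_upwards [hdecay.eventually (gt_mem_nhds (by linarith : (0:ℝ) < (1 - a) / 2)),
    eventually_ge_atTop 0] with x hsmall hx
  linarith [one_sub_vonMisesMean_le hx hδ.1 hδ.2.le]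

lemma besselI1_div_besselI0 (x : ℝ) : besselI1 x / besselI0 x = vonMisesMean x := by
  rw [besselI1, besselI0, mul_div_mul_left _ _ (by positivity), vonMisesMean]
  simp only [vonMisesIntegral, mul_one]

/-- `x ↦ I₁(x)/I₀(x)` is strictly increasing on `(0,∞)`, takes values in `(0,1)`,
tends to `0` at `0⁺` and to `1` at `∞`. -/
theorem besselRatio_strictMono_range :
    StrictMonoOn (fun x => besselI1 x / besselI0 x) (Set.Ioi (0:ℝ))
    ∧ (∀ x : ℝ, 0 < x → 0 < besselI1 x / besselI0 x ∧ besselI1 x / besselI0 x < 1)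
    ∧ Filter.Tendsto (fun x => besselI1 x / besselI0 x) (nhdsWithin 0 (Set.Ioi 0)) (nhds 0)
    ∧ Filter.Tendsto (fun x => besselI1 x / besselI0 x) Filter.atTop (nhds 1) := by
  simp only [besselI1_div_besselI0]
  refine ⟨strictMono_vonMisesMean.strictMonoOn _,
    fun x hx => ⟨vonMisesMean_zero ▸ strictMono_vonMisesMean hx, vonMisesMean_lt_one x⟩,
    ?_, tendsto_vonMisesMean_atTop⟩
  simpa only [vonMisesMean_zero] using
    (hasDerivAt_vonMisesMean 0).continuousAt.tendsto.mono_left nhdsWithin_le_nhds
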